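/- Let $d_1,\dots,d_\ell$ and $d_1',\dots,d_\ell'$ be positive integers such that $\prod_{i=1}^\ell (1+t+\cdots+t^{d_i'-1})$ divides $\prod_{i=1}^\ell (1+t+\cdots+t^{d_i-1})$ in $\mathbb{Z}[t]$. Then for each positive integer $n$, the number of indices $i$ with $n \mid d_i'$ is at most the number of indices $i$ with $n \mid d_i$. -/

import Mathlib

/-!
Multiplying both products by `(t - 1)^ℓ` turns each factor into `t^(d_i) - 1`. For a primitive
`n`-th root of unity `ζ ∈ ℂ`, the separable polynomial `t^d - 1` has `ζ` as a simple root when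
`n ∣ d` and not as a root otherwise, so the multiplicity of `ζ` in `∏ i, (t^(d_i) - 1)` is
`#{i | n ∣ d_i}`, and root multiplicities are monotone under divisibility.
-/

open Polynomial Finset

theorem Polynomial.rootMultiplicity_prod {R ι : Type*} [CommRing R] [IsDomain R]
    (s : Finset ι) (f : ι → R[X]) (hf : ∏ i ∈ s, f i ≠ 0) (x : R) :
    rootMultiplicity x (∏ i ∈ s, f i) = ∑ i ∈ s, rootMultiplicity x (f i) := by
  classical
  rw [← count_roots, roots_prod f s hf, Multiset.count_bind]
  simp only [count_roots, Finset.sum]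

theorem Polynomial.prod_X_pow_sub_one_ne_zero {R ι : Type*} [CommRing R] [IsDomain R]
    (s : Finset ι) (e : ι → ℕ) (he : ∀ i ∈ s, 0 < e i) :
    ∏ i ∈ s, (X ^ e i - 1 : R[X]) ≠ 0 :=
  prod_ne_zero_iff.2 fun i hi => by simpa using X_pow_sub_C_ne_zero (he i hi) (1 : R)

theorem IsPrimitiveRoot.rootMultiplicity_X_pow_sub_one {K : Type*} [Field K] {ζ : K} {n d : ℕ}
    (hζ : IsPrimitiveRoot ζ n) (hd : (d : K) ≠ 0) :
    rootMultiplicity ζ (X ^ d - 1 : K[X]) = if n ∣ d then 1 else 0 := by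
  have hroot : IsRoot (X ^ d - 1 : K[X]) ζ ↔ n ∣ d := by
    simp [sub_eq_zero, hζ.pow_eq_one_iff_dvd]
  split_ifs with hnd
  · have hsep : (X ^ d - 1 : K[X]).Separable := by
      simpa using separable_X_pow_sub_C (1 : K) hd one_ne_zero
    exact le_antisymm (rootMultiplicity_le_one_of_separable hsep ζ)
      ((rootMultiplicity_pos hsep.ne_zero).2 (hroot.2 hnd))
  · exact rootMultiplicity_eq_zero (hroot.not.2 hnd)

theorem IsPrimitiveRoot.rootMultiplicity_prod_X_pow_sub_one {K ι : Type*} [Field K]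
    {ζ : K} {n : ℕ} (hζ : IsPrimitiveRoot ζ n) (s : Finset ι) (e : ι → ℕ)
    (he : ∀ i ∈ s, (e i : K) ≠ 0) :
    rootMultiplicity ζ (∏ i ∈ s, (X ^ e i - 1 : K[X])) = #{i ∈ s | n ∣ e i} := by
  have hpos : ∀ i ∈ s, 0 < e i := fun i hi =>
    Nat.pos_of_ne_zero fun h => he i hi (by simp [h])
  rw [rootMultiplicity_prod s _ (prod_X_pow_sub_one_ne_zero s e hpos), card_filter]
  exact sum_congr rfl fun i hi => hζ.rootMultiplicity_X_pow_sub_one (he i hi)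

theorem prod_pow_sub_one_dvd_of_prod_geom_sum_dvd {R ι : Type*} [CommRing R] (s : Finset ι)
    (e e' : ι → ℕ) (x : R)
    (h : ∏ i ∈ s, ∑ j ∈ range (e' i), x ^ j ∣ ∏ i ∈ s, ∑ j ∈ range (e i), x ^ j) :
    ∏ i ∈ s, (x ^ e' i - 1) ∣ ∏ i ∈ s, (x ^ e i - 1) := by
  simpa only [prod_mul_pow_card, geom_sum_mul] using mul_dvd_mul_right h ((x - 1) ^ #s)

/-- If `∏ i (1 + t + ⋯ + t^(d'_i - 1))` divides `∏ i (1 + t + ⋯ + t^(d_i - 1))` in `ℤ[t]`,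
then for each `n > 0` the number of indices with `n ∣ d'_i` is at most the number of
indices with `n ∣ d_i`. -/
theorem stmt_1 (ℓ : ℕ) (d d' : Fin ℓ → ℕ) (hd : ∀ i, 0 < d i) (hd' : ∀ i, 0 < d' i)
    (hdvd : (∏ i, ∑ j ∈ Finset.range (d' i), (Polynomial.X : Polynomial ℤ) ^ j) ∣
      ∏ i, ∑ j ∈ Finset.range (d i), (Polynomial.X : Polynomial ℤ) ^ j)
    (n : ℕ) (hn : 0 < n) :
    (Finset.univ.filter fun i => n ∣ d' i).card ≤
      (Finset.univ.filter fun i => n ∣ d i).card := by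
  have hζ : IsPrimitiveRoot (Complex.exp (2 * Real.pi * Complex.I / n)) n :=
    Complex.isPrimitiveRoot_exp n hn.ne'
  have hdvdℂ : ∏ i, (X ^ d' i - 1 : ℂ[X]) ∣ ∏ i, (X ^ d i - 1 : ℂ[X]) := by
    simpa [Polynomial.map_prod] using Polynomial.map_dvd (Int.castRingHom ℂ)
      (prod_pow_sub_one_dvd_of_prod_geom_sum_dvd _ d d' X hdvd)
  rw [← hζ.rootMultiplicity_prod_X_pow_sub_one _ d fun i _ => by exact_mod_cast (hd i).ne',
    ← hζ.rootMultiplicity_prod_X_pow_sub_one _ d' fun i _ => by exact_mod_cast (hd' i).ne']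
  exact rootMultiplicity_le_rootMultiplicity_of_dvd
    (prod_X_pow_sub_one_ne_zero _ d fun i _ => hd i) hdvdℂ _
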